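/- For n ≥ 2 and m ≥ 3, the stabilizer of any vertex in the automorphism group of the Hamming graph H(n,m) has order at most ((m-1)!)^n · n!. -/

import Mathlib

/-!
An automorphism fixing `x` maps neighbours of `x` to neighbours of `x`, and two neighbours are
equal or adjacent iff they differ from `x` in the same coordinate. So it permutes the `n` lines
through `x` (cliques of `m - 1` neighbours each) by some `σ`, and maps line `i` bijectively onto
line `σ i`. These data determine the automorphism: one fixing `x` and all its neighbours fixes
everything, by induction on the distance from `x`, because a vertex at distance `≥ 2` is one of
only two common neighbours of two vertices closer to `x`, and the other one is closer still.
Counting the data gives `n! * ((m - 1)!) ^ n`.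
-/

/-- The Hamming graph `H(n,m)`: vertices are `n`-tuples over `Fin m`,
adjacent iff they differ in exactly one coordinate. -/
def hammingGraph (n m : ℕ) : SimpleGraph (Fin n → Fin m) where
  Adj x y := hammingDist x y = 1
  symm := by constructor; intro x y h; exact (hammingDist_comm y x).trans h
  loopless := by constructor; intro x h; simp [hammingDist_self] at h

open Function Finset
open scoped Nat

section HammingDist

variable {ι β : Type*} [Fintype ι] [DecidableEq ι] [DecidableEq β]

theorem hammingDist_eq_one_iff {x y : ι → β} :
    hammingDist x y = 1 ↔ ∃ i a, a ≠ x i ∧ y = update x i a := by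
  rw [hammingDist, card_eq_one]
  constructor
  · rintro ⟨i, hi⟩
    have hne (t : ι) : x t ≠ y t ↔ t = i := by simpa using congrArg (t ∈ ·) hi
    refine ⟨i, y i, fun h => (hne i).2 rfl h.symm, funext fun t => ?_⟩
    by_cases ht : t = i
    · simp [ht]
    · rw [update_of_ne ht]
      exact (not_not.1 (mt (hne t).1 ht)).symm
  · rintro ⟨i, a, ha, rfl⟩
    refine ⟨i, ext fun t => ?_⟩
    by_cases ht : t = i <;> simp [ht, ha.symm]

theorem hammingDist_update_le_one (x : ι → β) (i : ι) (a : β) :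
    hammingDist x (update x i a) ≤ 1 :=
  card_le_one.2 fun s hs t ht => by
    simp only [mem_filter, mem_univ, true_and] at hs ht
    grind [update_apply]

theorem hammingDist_update_lt {x v : ι → β} {i : ι} (hi : v i ≠ x i) :
    hammingDist x (update v i (x i)) < hammingDist x v := by
  have hfilter :
      ({t | x t ≠ update v i (x i) t} : Finset ι) = ({t | x t ≠ v t} : Finset ι).erase i := by
    ext t
    by_cases ht : t = i <;> simp [ht]
  rw [hammingDist, hfilter]
  exact card_erase_lt_of_mem (by simpa using hi.symm)

theorem eq_of_hammingDist_update_update_le_one {x : ι → β} {i j : ι} {a b : β}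
    (ha : a ≠ x i) (hb : b ≠ x j) (h : hammingDist (update x i a) (update x j b) ≤ 1) :
    i = j := by
  by_contra hij
  refine h.not_gt (one_lt_card.2 ⟨i, ?_, j, ?_, hij⟩) <;> simp [hij, Ne.symm hij, ha, hb.symm]

theorem eq_or_eq_of_hammingDist_update_eq_one {x v z : ι → β} {i j : ι} (hij : i ≠ j)
    (hi : v i ≠ x i) (hj : v j ≠ x j)
    (hzi : hammingDist (update v i (x i)) z = 1) (hzj : hammingDist (update v j (x j)) z = 1) :
    z = v ∨ z = update (update v i (x i)) j (x j) := by
  obtain ⟨k, c, hc, rfl⟩ := hammingDist_eq_one_iff.1 hzi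
  obtain ⟨l, d, -, hkl⟩ := hammingDist_eq_one_iff.1 hzj
  have hcoord_i := congrFun hkl i
  have hcoord_j := congrFun hkl j
  simp only [update_apply] at hcoord_i hcoord_j hc
  obtain rfl | rfl : k = i ∨ k = j := by grind
  · obtain rfl : c = v k := by grind
    exact .inl (by rw [update_idem, update_eq_self])
  · obtain rfl : c = x k := by grind
    exact .inr rfl

end HammingDist

theorem card_sigma_perm_equiv {ι : Type*} [Fintype ι] [DecidableEq ι] (L : ι → Type*)
    [∀ i, Fintype (L i)] [∀ i, DecidableEq (L i)] {k : ℕ}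
    (hL : ∀ i, Fintype.card (L i) = k) :
    Fintype.card (Σ σ : Equiv.Perm ι, ∀ i, L i ≃ L (σ i)) =
      (Fintype.card ι)! * k ! ^ Fintype.card ι := by
  have hequiv (i j : ι) : Fintype.card (L i ≃ L j) = k ! := by
    rw [Fintype.card_equiv (Fintype.equivOfCardEq ((hL i).trans (hL j).symm)), hL]
  simp [Fintype.card_pi, hequiv, Fintype.card_perm]

namespace hammingGraph

variable {n m n' m' : ℕ} {x : Fin n → Fin m}

theorem hammingDist_map_eq_one (f : hammingGraph n m ≃g hammingGraph n' m')
    {u v : Fin n → Fin m} (h : hammingDist u v = 1) : hammingDist (f u) (f v) = 1 :=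
  f.map_adj_iff.2 h

theorem hammingDist_map_le_one (f : hammingGraph n m ≃g hammingGraph n' m')
    {u v : Fin n → Fin m} (h : hammingDist u v ≤ 1) : hammingDist (f u) (f v) ≤ 1 := by
  rcases Nat.le_one_iff_eq_zero_or_eq_one.1 h with h | h
  · simp [hammingDist_eq_zero.1 h]
  · exact (hammingDist_map_eq_one f h).le

theorem apply_eq_self_of_forall_hammingDist_eq_one (f : hammingGraph n m ≃g hammingGraph n m)
    (hx : f x = x) (hnbr : ∀ v, hammingDist x v = 1 → f v = v) (v : Fin n → Fin m) :
    f v = v := by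
  induction hd : hammingDist x v using Nat.strong_induction_on generalizing v with
  | _ d ih =>
  rcases lt_or_ge d 2 with hd2 | hd2
  · obtain rfl | rfl : d = 0 ∨ d = 1 := by omega
    · rw [← hammingDist_eq_zero.1 hd, hx]
    · exact hnbr v hd
  obtain ⟨i, hi, j, hj, hij⟩ := one_lt_card.1 (show 1 < #{t | x t ≠ v t} by
    rw [← hammingDist, hd]; omega)
  simp only [mem_filter, mem_univ, true_and] at hi hj
  replace hi := Ne.symm hi
  replace hj := Ne.symm hj
  have hfix (u : Fin n → Fin m) (hu : hammingDist x u < d) : f u = u := ih _ hu u rfl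
  have hreset (k : Fin n) (hk : v k ≠ x k) : hammingDist (update v k (x k)) (f v) = 1 := by
    rw [← hfix (update v k (x k)) (hd ▸ hammingDist_update_lt hk)]
    exact hammingDist_map_eq_one f
      (hammingDist_eq_one_iff.2 ⟨k, v k, by simpa using hk, by simp⟩)
  rcases eq_or_eq_of_hammingDist_update_eq_one hij hi hj (hreset i hi) (hreset j hj) with h | h
  · exact h
  · have hw : hammingDist x (update (update v i (x i)) j (x j)) < d :=
      (hammingDist_update_lt (by simpa [Ne.symm hij] using hj)).trans
        (hd ▸ hammingDist_update_lt hi)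
    rw [← hfix _ hw] at h
    have := congrFun (f.injective h) i
    rw [update_of_ne hij, update_self] at this
    exact absurd this hi

theorem eq_of_apply_eq_of_forall_hammingDist_eq_one {V : Type*} {G : SimpleGraph V}
    {f g : hammingGraph n m ≃g G} (hx : f x = g x)
    (hnbr : ∀ v, hammingDist x v = 1 → f v = g v) : f = g := by
  suffices h : ∀ v, (f.trans g.symm) v = v by
    ext v : 1
    simpa using congrArg g (h v)
  intro v
  refine apply_eq_self_of_forall_hammingDist_eq_one (x := x) _ ?_ (fun u hu => ?_) v
  · simp [hx]
  · simp [hnbr u hu]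

variable {f : hammingGraph n m ≃g hammingGraph n m}

theorem exists_update_eq_of_apply_eq_self (hx : f x = x) {i : Fin n} (a : {a // a ≠ x i}) :
    ∃ k, ∃ b : {b // b ≠ x k}, f (update x i a) = update x k b := by
  have h := hammingDist_map_eq_one f (hammingDist_eq_one_iff.2 ⟨i, a, a.2, rfl⟩)
  rw [hx] at h
  obtain ⟨k, b, hb, hfb⟩ := hammingDist_eq_one_iff.1 h
  exact ⟨k, ⟨b, hb⟩, hfb⟩

theorem exists_line_of_apply_eq_self (hx : f x = x) (i : Fin n) :
    ∃ k, ∀ a : {a // a ≠ x i}, ∃ b : {b // b ≠ x k}, f (update x i a) = update x k b := by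
  rcases isEmpty_or_nonempty {a // a ≠ x i} with h | ⟨⟨a₀⟩⟩
  · exact ⟨i, isEmptyElim⟩
  obtain ⟨k, b₀, hb₀⟩ := exists_update_eq_of_apply_eq_self hx a₀
  refine ⟨k, fun a => ?_⟩
  obtain ⟨k', b, hb⟩ := exists_update_eq_of_apply_eq_self hx a
  obtain rfl : k' = k := by
    refine eq_of_hammingDist_update_update_le_one b.2 b₀.2 ?_
    rw [← hb, ← hb₀]
    refine hammingDist_map_le_one f ?_
    simpa using hammingDist_update_le_one (update x i a) i a₀
  exact ⟨b, hb⟩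

theorem exists_perm_of_apply_eq_self (hm : 2 ≤ m) (hx : f x = x) :
    ∃ σ : Equiv.Perm (Fin n), ∃ τ : ∀ i, {a // a ≠ x i} ≃ {b // b ≠ x (σ i)},
      ∀ i (a : {a // a ≠ x i}), f (update x i a) = update x (σ i) (τ i a) := by
  have : Nontrivial (Fin m) := Fin.nontrivial_iff_two_le.2 hm
  choose κ τ hτ using exists_line_of_apply_eq_self hx
  have hτ_inj (i : Fin n) : Injective (τ i) := fun a a' h => by
    have : update x i a.1 = update x i a' := f.injective <| by rw [hτ i a, hτ i a', h]
    exact Subtype.ext (update_injective x i this)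
  have hτ_bij (i : Fin n) : Bijective (τ i) :=
    (Fintype.bijective_iff_injective_and_card _).2
      ⟨hτ_inj i, by simp [Fintype.card_subtype_compl]⟩
  have hκ_inj : Injective κ := fun i j hij => by
    obtain ⟨b, hb⟩ := exists_ne (x (κ i))
    obtain ⟨a, ha⟩ := (hτ_bij i).2 ⟨b, hb⟩
    obtain ⟨a', ha'⟩ := (hτ_bij j).2 ⟨b, hij ▸ hb⟩
    have : update x i a.1 = update x j a' := f.injective <| by
      rw [hτ, hτ, ha, ha']
      exact congrArg (update x · b) hij
    exact eq_of_hammingDist_update_update_le_one a.2 a'.2 (by simp [this])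
  exact ⟨.ofBijective κ hκ_inj.bijective_of_finite, fun i => .ofBijective _ (hτ_bij i), hτ⟩

end hammingGraph

open hammingGraph

theorem hammingGraph_stabilizer_card_le_general (n m : ℕ) (hm : 3 ≤ m)
    (x : Fin n → Fin m) :
    Nat.card {f : hammingGraph n m ≃g hammingGraph n m // f x = x} ≤
      (Nat.factorial (m - 1)) ^ n * Nat.factorial n := by
  choose σ τ hτ using fun f : {f : hammingGraph n m ≃g hammingGraph n m // f x = x} =>
    exists_perm_of_apply_eq_self (by omega) f.2
  let Φ (f : {f : hammingGraph n m ≃g hammingGraph n m // f x = x}) :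
      Σ s : Equiv.Perm (Fin n), ∀ i, {a // a ≠ x i} ≃ {b // b ≠ x (s i)} :=
    ⟨σ f, τ f⟩
  have hΦ : Injective Φ := fun f g hfg => by
    refine Subtype.ext (eq_of_apply_eq_of_forall_hammingDist_eq_one (f.2.trans g.2.symm)
      fun v hv => ?_)
    obtain ⟨i, a, ha, rfl⟩ := hammingDist_eq_one_iff.1 hv
    have := congrArg (fun p => update x (p.1 i) (p.2 i ⟨a, ha⟩)) hfg
    simpa only [Φ, ← hτ] using this
  calc Nat.card {f : hammingGraph n m ≃g hammingGraph n m // f x = x}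
      ≤ Nat.card (Σ s : Equiv.Perm (Fin n), ∀ i, {a // a ≠ x i} ≃ {b // b ≠ x (s i)}) :=
        Nat.card_le_card_of_injective Φ hΦ
    _ = (m - 1)! ^ n * n ! := by
      rw [Nat.card_eq_fintype_card, card_sigma_perm_equiv (k := m - 1) _ fun i => by
        simp [Fintype.card_subtype_compl], Fintype.card_fin, mul_comm]

/-- For `n ≥ 2`, `m ≥ 3`, the stabilizer of any vertex of `H(n,m)` in the
automorphism group has at most `((m-1)!)^n * n!` elements. -/
theorem hammingGraph_stabilizer_card_le (n m : ℕ) (hn : 2 ≤ n) (hm : 3 ≤ m)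
    (x : Fin n → Fin m) :
    Nat.card {f : hammingGraph n m ≃g hammingGraph n m // f x = x} ≤
      (Nat.factorial (m - 1)) ^ n * Nat.factorial n :=
  hammingGraph_stabilizer_card_le_general n m hm x
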